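/- For every $s$ with $\tfrac{1}{2} \leq s \leq \tfrac{2}{3}$ there exists a constant $C > 0$ such that the following holds. Let $n_1, n_2, n_3$ be nonzero integers with $n_1 + n_2 \neq 0$, $|n_1 + n_2| \leq \tfrac{1}{8}|n_1|$, and $|n_3| \leq \tfrac{1}{8}|n_1|$, and set $n := n_1 + n_2 + n_3$ and $H_3 := (n_1 + n_2)(n_2 + n_3)(n_3 + n_1)$. Then $\langle n\rangle^{1/3}\, \langle n_1\rangle^{s}\, \langle n_2\rangle^{s} \;\leq\; C\, \langle n\rangle^{s}\, \langle n_3\rangle^{1-s}\, \langle H_3\rangle^{2/3}$. -/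

import Mathlib

/-! In this regime `|n₁ + n₂| ≥ 1` while `n₂ + n₃` and `n₃ + n₁` both have size `≳ |n₁|`, so
`⟨H₃⟩ ≳ |n₁|² ≳ ⟨n₁⟩⟨n₂⟩`. Hence `(⟨n₁⟩⟨n₂⟩)^s ≤ (⟨n₁⟩⟨n₂⟩)^{2/3} ≲ ⟨H₃⟩^{2/3}` for `s ≤ 2/3`,
while `⟨n⟩^{1/3} ≤ ⟨n⟩^s` for `s ≥ 1/3` and `⟨n₃⟩^{1-s} ≥ 1`. -/

noncomputable def jb (m : ℤ) : ℝ := Real.sqrt (1 + (m : ℝ) ^ 2)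

lemma one_le_jb (m : ℤ) : 1 ≤ jb m :=
  Real.one_le_sqrt.mpr (by nlinarith [sq_nonneg (m : ℝ)])

lemma jb_nonneg (m : ℤ) : 0 ≤ jb m := zero_le_one.trans (one_le_jb m)

lemma abs_le_jb (m : ℤ) : |(m : ℝ)| ≤ jb m := by
  rw [jb, ← Real.sqrt_sq_eq_abs]
  exact Real.sqrt_le_sqrt (by linarith)

lemma jb_le_one_add_abs (m : ℤ) : jb m ≤ 1 + |(m : ℝ)| := by
  rw [jb, Real.sqrt_le_left (by positivity)]
  nlinarith [abs_nonneg (m : ℝ), sq_abs (m : ℝ)]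

lemma one_add_abs_mul_one_add_abs_le_resonance {n₁ n₂ n₃ : ℤ} (h₁₂ : n₁ + n₂ ≠ 0)
    (h₁₂_small : 8 * |n₁ + n₂| ≤ |n₁|) (h₃_small : 8 * |n₃| ≤ |n₁|) :
    (1 + |n₁|) * (1 + |n₂|) ≤ 8 * |(n₁ + n₂) * (n₂ + n₃) * (n₃ + n₁)| := by
  obtain ⟨h₁, h₂, h₂₃, h₃₁⟩ : 1 + |n₁| ≤ 2 * |n₁| ∧ 1 + |n₂| ≤ 2 * |n₁| ∧
      6 * |n₁| ≤ 8 * |n₂ + n₃| ∧ 7 * |n₁| ≤ 8 * |n₃ + n₁| := by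
    simp only [abs_eq_max_neg] at *
    omega
  have h_far : 42 * |n₁| ^ 2 ≤ 64 * (|n₂ + n₃| * |n₃ + n₁|) := by
    nlinarith [mul_le_mul h₂₃ h₃₁ (by positivity) (by positivity)]
  have h_near : |n₂ + n₃| * |n₃ + n₁| ≤ |n₁ + n₂| * |n₂ + n₃| * |n₃ + n₁| := by
    rw [mul_assoc]
    exact le_mul_of_one_le_left (by positivity) (Int.one_le_abs h₁₂)
  rw [abs_mul, abs_mul]
  nlinarith [mul_le_mul h₁ h₂ (by positivity) (by positivity)]

lemma jb_mul_jb_le_resonance {n₁ n₂ n₃ : ℤ} (h₁₂ : n₁ + n₂ ≠ 0)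
    (h₁₂_small : 8 * |n₁ + n₂| ≤ |n₁|) (h₃_small : 8 * |n₃| ≤ |n₁|) :
    jb n₁ * jb n₂ ≤ 8 * jb ((n₁ + n₂) * (n₂ + n₃) * (n₃ + n₁)) := calc
  jb n₁ * jb n₂ ≤ (1 + |(n₁ : ℝ)|) * (1 + |(n₂ : ℝ)|) :=
    mul_le_mul (jb_le_one_add_abs n₁) (jb_le_one_add_abs n₂) (jb_nonneg n₂) (by positivity)
  _ ≤ 8 * |(((n₁ + n₂) * (n₂ + n₃) * (n₃ + n₁) : ℤ) : ℝ)| := by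
    exact_mod_cast one_add_abs_mul_one_add_abs_le_resonance h₁₂ h₁₂_small h₃_small
  _ ≤ 8 * jb ((n₁ + n₂) * (n₂ + n₃) * (n₃ + n₁)) :=
    mul_le_mul_of_nonneg_left (abs_le_jb _) (by norm_num)

theorem stmt_17 :
    ∀ s : ℝ, 1/2 ≤ s → s ≤ 2/3 →
      ∃ C : ℝ, 0 < C ∧ ∀ n₁ n₂ n₃ : ℤ, n₁ ≠ 0 → n₂ ≠ 0 → n₃ ≠ 0 → n₁ + n₂ ≠ 0 →
        8 * |n₁ + n₂| ≤ |n₁| → 8 * |n₃| ≤ |n₁| →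
        jb (n₁ + n₂ + n₃) ^ ((1:ℝ)/3) * jb n₁ ^ s * jb n₂ ^ s
          ≤ C * jb (n₁ + n₂ + n₃) ^ s * jb n₃ ^ (1 - s)
              * jb ((n₁ + n₂) * (n₂ + n₃) * (n₃ + n₁)) ^ ((2:ℝ)/3) := by
  intro s hs₁ hs₂
  refine ⟨4, by norm_num, fun n₁ n₂ n₃ _ _ _ h₁₂ h₁₂_small h₃_small => ?_⟩
  set N := n₁ + n₂ + n₃
  set H := (n₁ + n₂) * (n₂ + n₃) * (n₃ + n₁)
  have h_resonance : jb n₁ * jb n₂ ≤ 8 * jb H :=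
    jb_mul_jb_le_resonance h₁₂ h₁₂_small h₃_small
  have h_eight : (8 : ℝ) ^ ((2 : ℝ) / 3) = 4 := by
    rw [show (8 : ℝ) = 2 ^ 3 by norm_num, ← Real.rpow_natCast, ← Real.rpow_mul (by norm_num)]
    norm_num
  have hN : 1 ≤ jb N := one_le_jb N
  have h₁₂_ge : 1 ≤ jb n₁ * jb n₂ := one_le_mul_of_one_le_of_one_le (one_le_jb n₁) (one_le_jb n₂)
  calc jb N ^ ((1 : ℝ) / 3) * jb n₁ ^ s * jb n₂ ^ s
      = jb N ^ ((1 : ℝ) / 3) * (jb n₁ * jb n₂) ^ s := by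
        rw [mul_assoc, Real.mul_rpow (jb_nonneg n₁) (jb_nonneg n₂)]
    _ ≤ jb N ^ s * (jb n₁ * jb n₂) ^ ((2 : ℝ) / 3) := by
      gcongr
      linarith
    _ ≤ jb N ^ s * (8 * jb H) ^ ((2 : ℝ) / 3) := by gcongr
    _ = 4 * jb N ^ s * 1 * jb H ^ ((2 : ℝ) / 3) := by
      rw [Real.mul_rpow (by norm_num) (jb_nonneg H), h_eight]
      ring
    _ ≤ 4 * jb N ^ s * jb n₃ ^ (1 - s) * jb H ^ ((2 : ℝ) / 3) := by
      have : 1 ≤ jb n₃ ^ (1 - s) := Real.one_le_rpow (one_le_jb n₃) (by linarith)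
      gcongr
      exact Real.rpow_nonneg (jb_nonneg H) _
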